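/- Let a be an integer with a ≥ 2. For a prime p not dividing a, let h_a(p) denote the multiplicative order of a modulo p, i.e. the least positive integer h with a^h ≡ 1 (mod p). Then there exists a constant c(a) > 0, depending only on a, such that for every real number z ≥ 1, ∑_{p prime, p ∤ a, h_a(p) ≤ z} (ln p)/p ≤ c(a) · ln(z + 1). -/
import Mathlib
set_option maxHeartbeats 1000000

open Finset

lemma primesBelow_one : Nat.primesBelow 1 = ∅ := by decide

/-- Chebyshev-type bound: θ(n) ≤ 2n. -/
lemma theta_le (n : ℕ) : ∑ p ∈ (n+1).primesBelow, Real.log p ≤ 2 * n := by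
  have hc : ((primorial n : ℕ) : ℝ) = ∏ p ∈ (n+1).primesBelow, (p:ℝ) := by
    rw [primorial, Nat.primesBelow]; push_cast; rfl
  have h1 : ∑ p ∈ (n+1).primesBelow, Real.log p = Real.log (primorial n) := by
    rw [hc, Real.log_prod]
    intro p hp
    have := (Nat.prime_of_mem_primesBelow hp).pos
    positivity
  rw [h1]
  have h2 : (primorial n : ℝ) ≤ (4:ℝ)^n := by exact_mod_cast primorial_le_4_pow n
  calc Real.log (primorial n) ≤ Real.log ((4:ℝ)^n) := by
        apply Real.log_le_log (by exact_mod_cast primorial_pos n) h2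
    _ = n * Real.log 4 := by rw [Real.log_pow]
    _ ≤ n * 2 := by
        have h4 : Real.log 4 ≤ 2 := by
          rw [show (4:ℝ) = 2^2 by norm_num, Real.log_pow]
          push_cast
          nlinarith [Real.log_two_lt_d9]
        nlinarith [Nat.cast_nonneg (α := ℝ) n]
    _ = 2 * n := by ring

lemma mertens_aux (n : ℕ) :
    ∑ p ∈ (n+1).primesBelow, Real.log p / p ≤
      (∑ p ∈ (n+1).primesBelow, Real.log p) / n + 2 * (harmonic n : ℝ) := by
  induction n with
  | zero => simp [show (0:ℕ)+1 = 1 from rfl, primesBelow_one]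
  | succ n ih =>
    have hkey : (∑ p ∈ (n+1).primesBelow, Real.log p) / n
        ≤ (∑ p ∈ (n+1).primesBelow, Real.log p) / (n+1) + 2 / (n+1) := by
      rcases Nat.eq_zero_or_pos n with h0 | h0
      · subst h0
        simp [show (0:ℕ)+1 = 1 from rfl, primesBelow_one]
      · have hθ := theta_le n
        have hθ0 : (0:ℝ) ≤ ∑ p ∈ (n+1).primesBelow, Real.log p := by
          apply Finset.sum_nonneg
          intro p hp
          exact Real.log_nonneg (by exact_mod_cast (Nat.prime_of_mem_primesBelow hp).one_lt.le)
        have hn : (0:ℝ) < n := by exact_mod_cast h0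
        rw [div_add_div _ _ (ne_of_gt (by linarith)) (ne_of_gt (by linarith)),
          div_le_div_iff₀ hn (by positivity)]
        nlinarith
    rw [Nat.primesBelow_succ, harmonic_succ]
    by_cases hp : (n+1).Prime
    · rw [if_pos hp, Finset.sum_insert (fun h => absurd (Nat.lt_of_mem_primesBelow h) (by omega)),
        Finset.sum_insert (fun h => absurd (Nat.lt_of_mem_primesBelow h) (by omega))]
      push_cast
      have hlog : (0:ℝ) ≤ Real.log (↑n+1) :=
        Real.log_nonneg (by push_cast; linarith [Nat.cast_nonneg (α := ℝ) n])
      push_cast at hkey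
      calc Real.log (↑n+1) / (↑n+1) + ∑ p ∈ (n+1).primesBelow, Real.log p / p
          ≤ Real.log (↑n+1) / (↑n+1) + ((∑ p ∈ (n+1).primesBelow, Real.log p) / (↑n+1)
              + 2 / (↑n+1) + 2 * (harmonic n : ℝ)) := by
            have := ih
            push_cast at this
            linarith
        _ = (Real.log (↑n+1) + ∑ p ∈ (n+1).primesBelow, Real.log p) / (↑n+1)
              + 2 * ((harmonic n : ℝ) + (↑n+1)⁻¹) := by
            field_simp
            ring
        _ ≤ _ := le_refl _
    · rw [if_neg hp]
      push_cast at hkey ⊢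
      have hih := ih
      push_cast at hih
      calc ∑ p ∈ (n+1).primesBelow, Real.log p / p
          ≤ (∑ p ∈ (n+1).primesBelow, Real.log p) / (↑n+1) + 2 / (↑n+1)
            + 2 * (harmonic n : ℝ) := by linarith
        _ = (∑ p ∈ (n+1).primesBelow, Real.log p) / (↑n+1)
            + 2 * ((harmonic n : ℝ) + (↑n+1)⁻¹) := by field_simp; ring
        _ ≤ _ := le_refl _

/-- Mertens-type bound. -/
lemma mertens (n : ℕ) :
    ∑ p ∈ (n+1).primesBelow, Real.log p / p ≤ 4 + 2 * Real.log n := by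
  have h1 := mertens_aux n
  have h2 : (∑ p ∈ (n+1).primesBelow, Real.log p) / n ≤ 2 := by
    rcases Nat.eq_zero_or_pos n with h0 | h0
    · subst h0; simp [show (0:ℕ)+1 = 1 from rfl, primesBelow_one]
    · rw [div_le_iff₀ (by exact_mod_cast h0)]
      exact theta_le n
  have h3 := harmonic_le_one_add_log n
  linarith

/-- Let `a ≥ 2` be an integer, and for a prime `p ∤ a` let `h_a(p)`
be the multiplicative order of `a` mod `p`. There is a constant `c(a) > 0` such that
for every real `z ≥ 1`, `∑_{p ∤ a, h_a(p) ≤ z} (ln p)/p ≤ c(a) ln(z+1)`. -/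
theorem romanoff_order_sum (a : ℕ) (ha : 2 ≤ a) :
    ∃ c : ℝ, 0 < c ∧
      ∀ z : ℝ, 1 ≤ z →
        Summable (fun p : ℕ =>
          if p.Prime ∧ ¬ (p ∣ a) ∧ (orderOf (a : ZMod p) : ℝ) ≤ z
          then Real.log p / (p : ℝ) else 0) ∧
        ∑' p : ℕ,
            (if p.Prime ∧ ¬ (p ∣ a) ∧ (orderOf (a : ZMod p) : ℝ) ≤ z
             then Real.log p / (p : ℝ) else 0) ≤
          c * Real.log (z + 1) := by
  have hlog2 : (0:ℝ) < Real.log 2 := Real.log_pos (by norm_num)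
  have hloga : (0:ℝ) ≤ Real.log a :=
    Real.log_nonneg (by exact_mod_cast Nat.one_le_of_lt ha)
  refine ⟨4 / Real.log 2 + 4 + Real.log a / Real.log 2 + 1, by positivity, ?_⟩
  intro z hz
  have hz0 : (0:ℝ) < z := by linarith
  set K := ⌊z⌋₊ with hKdef
  have hK1 : 1 ≤ K := Nat.le_floor (by exact_mod_cast hz)
  have hKz : (K:ℝ) ≤ z := Nat.floor_le (by linarith)
  set N := ∏ h ∈ Finset.Icc 1 K, (a^h - 1) with hNdef
  have hfac : ∀ h ∈ Finset.Icc 1 K, 1 ≤ a^h - 1 := by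
    intro h hh
    have h1 : 1 ≤ h := (Finset.mem_Icc.mp hh).1
    have : a = a^1 := (pow_one a).symm
    have h2 : a ≤ a^h := by
      calc a = a^1 := (pow_one a).symm
        _ ≤ a^h := Nat.pow_le_pow_right (by omega) h1
    omega
  have hN1 : 1 ≤ N := Finset.one_le_prod' hfac
  have hN0 : N ≠ 0 := by omega
  -- every prime in the support divides N
  have hsupp : ∀ p : ℕ,
      (p.Prime ∧ ¬ (p ∣ a) ∧ (orderOf (a : ZMod p) : ℝ) ≤ z) → p ∣ N := by
    rintro p ⟨hp, hpa, hordz⟩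
    haveI : Fact p.Prime := ⟨hp⟩
    have ha0 : (a : ZMod p) ≠ 0 := by
      rw [Ne, ZMod.natCast_eq_zero_iff]; exact hpa
    have hfin : (a : ZMod p)^(p-1) = 1 := ZMod.pow_card_sub_one_eq_one ha0
    have hpos : 0 < orderOf (a : ZMod p) :=
      orderOf_pos_iff.mpr (isOfFinOrder_iff_pow_eq_one.mpr
        ⟨p-1, by have := hp.two_le; omega, hfin⟩)
    have hordK : orderOf (a : ZMod p) ≤ K := Nat.le_floor (by exact_mod_cast hordz)
    have hge : 1 ≤ a ^ orderOf (a : ZMod p) := Nat.one_le_pow _ _ (by omega)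
    have hdvd1 : p ∣ a ^ orderOf (a : ZMod p) - 1 := by
      have h1 : ((a ^ orderOf (a : ZMod p) - 1 : ℕ) : ZMod p) = 0 := by
        push_cast [hge]
        rw [pow_orderOf_eq_one]
        ring
      exact (ZMod.natCast_eq_zero_iff _ p).mp h1
    exact hdvd1.trans (Finset.dvd_prod_of_mem _ (Finset.mem_Icc.mpr ⟨hpos, hordK⟩))
  have hzero : ∀ p ∉ N.divisors,
      (if p.Prime ∧ ¬ (p ∣ a) ∧ (orderOf (a : ZMod p) : ℝ) ≤ z
       then Real.log p / (p : ℝ) else 0) = 0 := by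
    intro p hp
    rw [if_neg]
    intro hcond
    exact hp (Nat.mem_divisors.mpr ⟨hsupp p hcond, hN0⟩)
  refine ⟨summable_of_ne_finset_zero hzero, ?_⟩
  rw [tsum_eq_sum hzero]
  set S := N.divisors.filter Nat.Prime with hSdef
  have hSprime : ∀ p ∈ S, p.Prime := fun p hp => (Finset.mem_filter.mp hp).2
  have hSlog : ∀ p ∈ S, (0:ℝ) ≤ Real.log p := fun p hp =>
    Real.log_nonneg (by exact_mod_cast (hSprime p hp).one_lt.le)
  have hstep1 : ∑ p ∈ N.divisors,
      (if p.Prime ∧ ¬ (p ∣ a) ∧ (orderOf (a : ZMod p) : ℝ) ≤ z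
       then Real.log p / (p : ℝ) else 0) ≤ ∑ p ∈ S, Real.log p / p := by
    calc ∑ p ∈ N.divisors,
        (if p.Prime ∧ ¬ (p ∣ a) ∧ (orderOf (a : ZMod p) : ℝ) ≤ z
         then Real.log p / (p : ℝ) else 0)
        ≤ ∑ p ∈ N.divisors, (if p.Prime then Real.log p / (p : ℝ) else 0) := by
          apply Finset.sum_le_sum
          intro p hp
          split_ifs with h1 h2 h3
          · exact le_refl _
          · exact absurd h1.1 h2
          · have : (0:ℝ) ≤ Real.log p :=
              Real.log_nonneg (by exact_mod_cast h3.one_lt.le)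
            positivity
          · exact le_refl _
      _ = ∑ p ∈ S, Real.log p / p := (Finset.sum_filter _ _).symm
  -- total log bound
  have hθS : ∑ p ∈ S, Real.log p ≤ z^2 * Real.log a := by
    have hdvd : ∏ p ∈ S, p ∣ N :=
      Finset.prod_primes_dvd N
        (fun p hp => (hSprime p hp).prime)
        (fun p hp => (Nat.mem_divisors.mp (Finset.mem_filter.mp hp).1).1)
    have hle : (∏ p ∈ S, p) ≤ N := Nat.le_of_dvd (by omega) hdvd
    have hprodpos : 0 < ∏ p ∈ S, p := Finset.prod_pos fun p hp => (hSprime p hp).pos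
    have h1 : ∑ p ∈ S, Real.log p = Real.log ((∏ p ∈ S, p : ℕ) : ℝ) := by
      push_cast
      rw [Real.log_prod]
      intro p hp
      have := (hSprime p hp).pos
      positivity
    have hNle : N ≤ (a^K)^K := by
      calc N ≤ ∏ _h ∈ Finset.Icc 1 K, a^K := by
            apply Finset.prod_le_prod'
            intro h hh
            have h2 : a^h ≤ a^K := Nat.pow_le_pow_right (by omega) (Finset.mem_Icc.mp hh).2
            omega
        _ = (a^K)^K := by rw [Finset.prod_const, Nat.card_Icc]; norm_num
    have h2 : Real.log ((∏ p ∈ S, p : ℕ) : ℝ) ≤ Real.log (((a^K)^K : ℕ) : ℝ) := by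
      apply Real.log_le_log (by exact_mod_cast hprodpos)
      exact_mod_cast le_trans hle hNle
    have h3 : Real.log (((a^K)^K : ℕ) : ℝ) = (K:ℝ) * ((K:ℝ) * Real.log a) := by
      push_cast
      rw [Real.log_pow, Real.log_pow]
    rw [h1]
    calc Real.log ((∏ p ∈ S, p : ℕ) : ℝ) ≤ (K:ℝ) * ((K:ℝ) * Real.log a) := h2.trans_eq h3
      _ ≤ z^2 * Real.log a := by
          have hKK : (K:ℝ)*(K:ℝ) ≤ z*z := mul_le_mul hKz hKz (Nat.cast_nonneg K) (le_of_lt hz0)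
          nlinarith [mul_le_mul_of_nonneg_right hKK hloga]
  -- split at z^2
  have hz2 : (1:ℝ) ≤ z^2 := by nlinarith
  have hz2pos : (0:ℝ) < z^2 := by linarith
  set T := ⌊z^2⌋₊ with hTdef
  have hT1 : 1 ≤ T := Nat.le_floor (by exact_mod_cast hz2)
  have hTle : (T:ℝ) ≤ z^2 := Nat.floor_le (by positivity)
  refine hstep1.trans ?_
  rw [← Finset.sum_filter_add_sum_filter_not S (fun p : ℕ => (p:ℝ) ≤ z^2) (fun p => Real.log p / p)]
  have hhead : ∑ p ∈ S.filter (fun p : ℕ => (p:ℝ) ≤ z^2), Real.log p / p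
      ≤ 4 + 4 * Real.log z := by
    have hsub : S.filter (fun p : ℕ => (p:ℝ) ≤ z^2) ⊆ (T+1).primesBelow := by
      intro p hp
      obtain ⟨hpS, hpz⟩ := Finset.mem_filter.mp hp
      refine Nat.mem_primesBelow.mpr ⟨?_, hSprime p hpS⟩
      have : p ≤ T := Nat.le_floor hpz
      omega
    calc ∑ p ∈ S.filter (fun p : ℕ => (p:ℝ) ≤ z^2), Real.log p / p
        ≤ ∑ p ∈ (T+1).primesBelow, Real.log p / p := by
          apply Finset.sum_le_sum_of_subset_of_nonneg hsub
          intro p hp _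
          have h2 := (Nat.prime_of_mem_primesBelow hp).pos
          have h3 : (0:ℝ) ≤ Real.log p :=
            Real.log_nonneg (by exact_mod_cast (Nat.prime_of_mem_primesBelow hp).one_lt.le)
          positivity
      _ ≤ 4 + 2 * Real.log T := mertens T
      _ ≤ 4 + 4 * Real.log z := by
          have h1 : Real.log T ≤ Real.log (z^2) := by
            apply Real.log_le_log (by exact_mod_cast hT1) hTle
          rw [Real.log_pow] at h1
          push_cast at h1
          linarith
  have htail : ∑ p ∈ S.filter (fun p : ℕ => ¬ (p:ℝ) ≤ z^2), Real.log p / p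
      ≤ Real.log a := by
    calc ∑ p ∈ S.filter (fun p : ℕ => ¬ (p:ℝ) ≤ z^2), Real.log p / p
        ≤ ∑ p ∈ S.filter (fun p : ℕ => ¬ (p:ℝ) ≤ z^2), Real.log p / z^2 := by
          apply Finset.sum_le_sum
          intro p hp
          obtain ⟨hpS, hpz⟩ := Finset.mem_filter.mp hp
          push_neg at hpz
          exact div_le_div_of_nonneg_left (hSlog p hpS) hz2pos hpz.le
      _ = (∑ p ∈ S.filter (fun p : ℕ => ¬ (p:ℝ) ≤ z^2), Real.log p) / z^2 := by
          rw [Finset.sum_div]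
      _ ≤ (∑ p ∈ S, Real.log p) / z^2 := by
          apply div_le_div_of_nonneg_right ?_ hz2pos.le
          exact Finset.sum_le_sum_of_subset_of_nonneg (Finset.filter_subset _ _)
            (fun p hp _ => hSlog p hp)
      _ ≤ (z^2 * Real.log a) / z^2 := by
          apply div_le_div_of_nonneg_right hθS hz2pos.le
      _ = Real.log a := by field_simp
  -- combine
  have hL2 : Real.log 2 ≤ Real.log (z+1) := Real.log_le_log (by norm_num) (by linarith)
  have hLz : Real.log z ≤ Real.log (z+1) := Real.log_le_log hz0 (by linarith)
  set L := Real.log (z+1)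
  have hLpos : 0 < L := lt_of_lt_of_le hlog2 hL2
  calc ∑ p ∈ S.filter (fun p : ℕ => (p:ℝ) ≤ z^2), Real.log p / p
        + ∑ p ∈ S.filter (fun p : ℕ => ¬ (p:ℝ) ≤ z^2), Real.log p / p
      ≤ (4 + 4 * Real.log z) + Real.log a := by
        linarith [hhead, htail]
    _ ≤ (4 / Real.log 2 + 4 + Real.log a / Real.log 2 + 1) * L := by
        have e1 : 4 ≤ 4 / Real.log 2 * L := by
          rw [div_mul_eq_mul_div, le_div_iff₀ hlog2]
          nlinarith
        have e2 : 4 * Real.log z ≤ 4 * L := by linarith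
        have e3 : Real.log a ≤ Real.log a / Real.log 2 * L := by
          rw [div_mul_eq_mul_div, le_div_iff₀ hlog2]
          nlinarith
        nlinarith
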